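/- arXiv:1103.1584 — 9 statements merged into one kernel-verified Lean document; each statement's English description precedes it below -/
import Mathlib

section
/- Let n ≥ 1 and let T = {(z₁,…,zₙ) ∈ (ℂ \ {0})ⁿ : z₁⋯zₙ = 1}. The map sending (z₁,…,zₙ) ∈ T to (σ₁(z),…,σ_{n−1}(z)) ∈ ℂ^{n−1}, where σ₁,…,σ_{n−1} are the elementary symmetric polynomials, is surjective onto ℂ^{n−1}, and two points of T have the same image if and only if they differ by a permutation of the coordinates. -/
/-!
A point `z` of the torus is determined up to permutation by the multiset of its coordinates,
which is the multiset of roots of `∏ (X - zᵢ) = ∑ₖ (-1)ᵏ σₖ(z) Xⁿ⁻ᵏ`. On the torus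
`σₙ = z₁⋯zₙ = 1` and `σ₀ = 1`, so `σ₁, …, σₙ₋₁` determine this polynomial and hence `z` up to
permutation. Conversely, since `ℂ` is algebraically closed, any monic polynomial of degree `n`
with these middle coefficients and `σₙ = 1` has `n` roots, whose product is `1`.
-/

open Finset

/-- The `k`-th elementary symmetric polynomial evaluated at `z : Fin n → ℂ`. -/
noncomputable def esymmVal (n : ℕ) (z : Fin n → ℂ) (k : ℕ) : ℂ :=
  ∑ s ∈ Finset.powersetCard k (Finset.univ : Finset (Fin n)), ∏ i ∈ s, z i

open Polynomial

namespace Multiset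

theorem esymm_zero {R : Type*} [CommSemiring R] (s : Multiset R) : s.esymm 0 = 1 := by
  simp [esymm, powersetCard_zero_left]

theorem esymm_card {R : Type*} [CommSemiring R] (s : Multiset R) : s.esymm (card s) = s.prod := by
  simp [esymm, powersetCard_self]

theorem eq_of_card_eq_of_esymm_eq {R : Type*} [CommRing R] [IsDomain R] {s t : Multiset R}
    (hcard : card s = card t) (h : ∀ k ≤ card s, s.esymm k = t.esymm k) : s = t := by
  have hprod : (s.map fun a => X - C a).prod = (t.map fun a => X - C a).prod := by
    ext k
    by_cases hk : k ≤ card s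
    · rw [prod_X_sub_C_coeff s hk, prod_X_sub_C_coeff t (hcard ▸ hk), ← hcard, h _ (Nat.sub_le _ _)]
    · rw [coeff_eq_zero_of_natDegree_lt, coeff_eq_zero_of_natDegree_lt] <;>
        simp only [natDegree_multiset_prod_X_sub_C_eq_card] <;> omega
  simpa only [roots_multiset_prod_X_sub_C] using congrArg roots hprod

theorem exists_card_eq_esymm_eq {K : Type*} [Field K] [IsAlgClosed K] (n : ℕ) (c : ℕ → K)
    (hc : c 0 = 1) : ∃ s : Multiset K, card s = n ∧ ∀ k ≤ n, s.esymm k = c k := by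
  set q : K[X] := ∑ i ∈ Finset.range n, C ((-1) ^ (n - i) * c (n - i)) * X ^ i
  have hq : q.degree < n := by
    simp_rw [q, ← Fin.sum_univ_eq_sum_range (fun i => C _ * X ^ i), degree_sum_fin_lt]
  set p : K[X] := X ^ n + q
  have hmonic : p.Monic := monic_X_pow_add hq
  have hdeg : p.natDegree = n := by
    rw [natDegree_add_eq_left_of_degree_lt (by rwa [degree_X_pow]), natDegree_X_pow]
  have hcoeff : ∀ i < n, p.coeff i = (-1) ^ (n - i) * c (n - i) := fun i hi => by
    simp only [p, q, coeff_add, coeff_X_pow, if_neg hi.ne, finsetSum_coeff, coeff_C_mul_X_pow,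
      Finset.sum_ite_eq, Finset.mem_range, if_pos hi, zero_add]
  have hcard : card p.roots = p.natDegree := IsAlgClosed.card_roots_eq_natDegree
  refine ⟨p.roots, hcard.trans hdeg, fun k hk => ?_⟩
  rcases k.eq_zero_or_pos with rfl | hk0
  · rw [esymm_zero, hc]
  have hvieta := coeff_eq_esymm_roots_of_card hcard (k := n - k) (by omega)
  rw [hcoeff _ (by omega), hmonic.leadingCoeff, one_mul, hdeg, Nat.sub_sub_self hk] at hvieta
  exact (mul_left_cancel₀ (pow_ne_zero _ (neg_ne_zero.mpr one_ne_zero)) hvieta).symm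

theorem exists_fin_map_univ_val_eq {α : Type*} {n : ℕ} (s : Multiset α) (hs : card s = n) :
    ∃ f : Fin n → α, univ.val.map f = s := by
  subst hs
  obtain ⟨l, rfl⟩ : ∃ l : List α, (l : Multiset α) = s := Quot.exists_rep s
  change ∃ f : Fin l.length → α, univ.val.map f = l
  exact ⟨l.get, by rw [Fin.univ_val_map, List.ofFn_get]⟩

end Multiset

theorem Fintype.map_univ_val_eq_iff {α β : Type*} [Fintype α] {f g : α → β} :
    univ.val.map f = univ.val.map g ↔ ∃ σ : Equiv.Perm α, g = f ∘ σ := by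
  classical
  constructor
  · intro h
    have hfiber : ∀ b, Fintype.card {i // g i = b} = Fintype.card {i // f i = b} := fun b => by
      simpa [Multiset.count_map, Fintype.card_subtype, Finset.card, Finset.filter, eq_comm]
        using (congrArg (Multiset.count b) h).symm
    exact ⟨Equiv.ofFiberEquiv fun b => Fintype.equivOfCardEq (hfiber b),
      funext fun i => (Equiv.ofFiberEquiv_map _ i).symm⟩
  · rintro ⟨σ, rfl⟩
    rw [← Multiset.map_map, Multiset.map_univ_val_equiv]

section esymmVal

variable {n : ℕ}

theorem esymmVal_eq_esymm_map (z : Fin n → ℂ) (k : ℕ) :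
    esymmVal n z k = (univ.val.map z).esymm k :=
  (Finset.esymm_map_val z univ k).symm

theorem esymmVal_self (z : Fin n → ℂ) : esymmVal n z n = ∏ i, z i := by
  rw [esymmVal_eq_esymm_map, prod_eq_multiset_prod, ← Multiset.esymm_card, Multiset.card_map,
    card_val, card_univ, Fintype.card_fin]

theorem map_univ_val_eq_of_esymmVal_eq {z z' : Fin n → ℂ} (hprod : ∏ i, z i = ∏ i, z' i)
    (h : ∀ k : Fin (n - 1), esymmVal n z (k + 1) = esymmVal n z' (k + 1)) :
    univ.val.map z = univ.val.map z' := by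
  refine Multiset.eq_of_card_eq_of_esymm_eq (by simp) fun k hk => ?_
  simp only [Multiset.card_map, card_val, card_univ, Fintype.card_fin] at hk
  rcases k with _ | j
  · simp only [Multiset.esymm_zero]
  rcases hk.lt_or_eq with hj | rfl
  · simpa only [esymmVal_eq_esymm_map] using h ⟨j, by omega⟩
  · rw [← esymmVal_eq_esymm_map, ← esymmVal_eq_esymm_map, esymmVal_self, esymmVal_self, hprod]

theorem exists_prod_eq_one_esymmVal_eq (w : Fin (n - 1) → ℂ) :
    ∃ z : Fin n → ℂ, ∏ i, z i = 1 ∧ ∀ k : Fin (n - 1), esymmVal n z (k + 1) = w k := by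
  obtain ⟨s, hs, hesymm⟩ := Multiset.exists_card_eq_esymm_eq n
    (fun k => if h : 0 < k ∧ k < n then w ⟨k - 1, by omega⟩ else 1) (by simp)
  obtain ⟨z, rfl⟩ := Multiset.exists_fin_map_univ_val_eq s hs
  refine ⟨z, ?_, fun k => ?_⟩
  · rw [← esymmVal_self, esymmVal_eq_esymm_map, hesymm n le_rfl]
    simp
  · rw [esymmVal_eq_esymm_map, hesymm _ (by omega), dif_pos (by omega)]
    simp

end esymmVal

theorem sln_adjoint_quotient_general (n : ℕ) :
    (∀ w : Fin (n - 1) → ℂ, ∃ z : Fin n → ℂ, (∀ i, z i ≠ 0) ∧ ∏ i, z i = 1 ∧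
      ∀ k : Fin (n - 1), esymmVal n z (k.1 + 1) = w k) ∧
    (∀ z z' : Fin n → ℂ, (∀ i, z i ≠ 0) → ∏ i, z i = 1 →
      (∀ i, z' i ≠ 0) → ∏ i, z' i = 1 →
      ((∀ k : Fin (n - 1), esymmVal n z (k.1 + 1) = esymmVal n z' (k.1 + 1)) ↔
        ∃ σ : Equiv.Perm (Fin n), z' = z ∘ σ)) := by
  refine ⟨fun w => ?_, fun z z' _ hz _ hz' => ?_⟩
  · obtain ⟨z, hprod, hesymm⟩ := exists_prod_eq_one_esymmVal_eq w
    exact ⟨z, fun i => prod_ne_zero_iff.mp (hprod ▸ one_ne_zero) i (mem_univ i), hprod, hesymm⟩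
  · rw [← Fintype.map_univ_val_eq_iff]
    exact ⟨map_univ_val_eq_of_esymmVal_eq (hz.trans hz'.symm),
      fun h k => by simp only [esymmVal_eq_esymm_map, h]⟩

/-- On the maximal torus `T = {z ∈ (ℂ*)ⁿ : z₁⋯zₙ = 1}` of `SL(n,ℂ)`, the map
`z ↦ (σ₁(z),…,σ_{n−1}(z))` given by the elementary symmetric polynomials is
surjective onto `ℂ^{n−1}`, and two points of `T` have the same image iff they
differ by a permutation of the coordinates. -/
theorem sln_adjoint_quotient (n : ℕ) (hn : 1 ≤ n) :
    (∀ w : Fin (n - 1) → ℂ, ∃ z : Fin n → ℂ, (∀ i, z i ≠ 0) ∧ ∏ i, z i = 1 ∧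
      ∀ k : Fin (n - 1), esymmVal n z (k.1 + 1) = w k) ∧
    (∀ z z' : Fin n → ℂ, (∀ i, z i ≠ 0) → ∏ i, z i = 1 →
      (∀ i, z' i ≠ 0) → ∏ i, z' i = 1 →
      ((∀ k : Fin (n - 1), esymmVal n z (k.1 + 1) = esymmVal n z' (k.1 + 1)) ↔
        ∃ σ : Equiv.Perm (Fin n), z' = z ∘ σ)) :=
  sln_adjoint_quotient_general n
end

section
/- Let z = x + iy be a nonzero complex number, and set r² = x² + y², X = x + x/r², Y = y − y/r², and τ = y²/r². Then τ ≥ 0 and Y² = (X² + Y² + 4(τ − 1))·τ. -/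
/-!
With `r² = x² + y²`, both sides of the canoe equation carry the factor `(r² − 1)² / r²`:
`X² + Y² + 4(τ − 1) = r² + r⁻² − 2 = (r² − 1)² / r²`, while `Y² = y² (1 − r⁻²)² = τ · (r² − 1)² / r²`.
-/

namespace Canoe

variable {x y : ℝ}

lemma sq_add_sq_ne_zero_of_ne_zero (hz : (x : ℂ) + y * Complex.I ≠ 0) : x ^ 2 + y ^ 2 ≠ 0 := by
  rw [← Complex.normSq_add_mul_I]
  exact Complex.normSq_pos.mpr hz |>.ne'

lemma sq_Y (hr : x ^ 2 + y ^ 2 ≠ 0) :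
    (y - y / (x ^ 2 + y ^ 2)) ^ 2
      = y ^ 2 / (x ^ 2 + y ^ 2) * ((x ^ 2 + y ^ 2 - 1) ^ 2 / (x ^ 2 + y ^ 2)) := by
  field_simp

lemma sq_X_add_sq_Y_add_four_mul (hr : x ^ 2 + y ^ 2 ≠ 0) :
    (x + x / (x ^ 2 + y ^ 2)) ^ 2 + (y - y / (x ^ 2 + y ^ 2)) ^ 2 + 4 * (y ^ 2 / (x ^ 2 + y ^ 2) - 1)
      = (x ^ 2 + y ^ 2 - 1) ^ 2 / (x ^ 2 + y ^ 2) := by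
  field_simp
  ring

end Canoe

/-- For a nonzero complex number `z = x + iy`, with `r² = x² + y²`,
`X = x + x/r²`, `Y = y − y/r²`, `τ = y²/r²`, one has `τ ≥ 0` and
`Y² = (X² + Y² + 4(τ − 1))·τ` (the defining equation of the "canoe"). -/
theorem canoe_relation (x y : ℝ) (hz : (x : ℂ) + y * Complex.I ≠ 0) :
    let r2 : ℝ := x ^ 2 + y ^ 2
    let X : ℝ := x + x / r2
    let Y : ℝ := y - y / r2
    let τ : ℝ := y ^ 2 / r2
    0 ≤ τ ∧ Y ^ 2 = (X ^ 2 + Y ^ 2 + 4 * (τ - 1)) * τ := by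
  intro r2 X Y τ
  have hr : x ^ 2 + y ^ 2 ≠ 0 := Canoe.sq_add_sq_ne_zero_of_ne_zero hz
  refine ⟨by positivity, ?_⟩
  rw [Canoe.sq_X_add_sq_Y_add_four_mul hr, Canoe.sq_Y hr, mul_comm]
end

section
/- The function g : ℝ² → ℝ defined by g(X,Y) = (1/2)·√(Y² + (X² + Y² − 4)²/16) − (X² + Y² − 4)/8 is not differentiable at the point (2,0), and not differentiable at the point (−2,0). -/
/-!
On the lines `X = ±2` the quantity `X² + Y² - 4` reduces to `Y²`, so there
`2 g + Y²/4 = √(Y² (1 + Y²/16)) = |Y| √(1 + Y²/16)`. The factor `√(1 + Y²/16)` is smooth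
and nonzero at `Y = 0`, so this restriction inherits the corner of `|Y|` at `0`.
-/

open Real Topology

theorem not_differentiableAt_abs_mul {h : ℝ → ℝ} (hh : DifferentiableAt ℝ h 0)
    (h0 : h 0 ≠ 0) :
    ¬ DifferentiableAt ℝ (fun t => |t| * h t) 0 := by
  intro hd
  have hne : ∀ᶠ t in 𝓝 0, h t ≠ 0 := hh.continuousAt.eventually_ne h0
  have habs : (fun t => |t| * h t / h t) =ᶠ[𝓝 0] fun t => |t| :=
    hne.mono fun t ht => mul_div_cancel_right₀ |t| ht
  exact not_differentiableAt_abs_zero ((hd.div hh h0).congr_of_eventuallyEq habs.symm)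

theorem not_differentiableAt_sqrt_sq_mul {u : ℝ → ℝ} (hu : DifferentiableAt ℝ u 0)
    (hu0 : 0 < u 0) :
    ¬ DifferentiableAt ℝ (fun t => √(t ^ 2 * u t)) 0 := by
  have hfactor : (fun t => √(t ^ 2 * u t)) = fun t => |t| * √(u t) := by
    funext t
    rw [sqrt_mul (sq_nonneg t), sqrt_sq_eq_abs]
  rw [hfactor]
  exact not_differentiableAt_abs_mul (hu.sqrt hu0.ne') (sqrt_pos.mpr hu0).ne'

/-- The function `g(X,Y) = (1/2)√(Y² + (X² + Y² − 4)²/16) − (X² + Y² − 4)/8`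
expressing the invariant `τ` on the reduced phase space of `SU(2)` lattice
gauge theory is not differentiable at the two singular points `(±2, 0)`. -/
theorem tau_not_differentiable_at_singular_points :
    let g : ℝ × ℝ → ℝ := fun p =>
      (1 / 2) * Real.sqrt (p.2 ^ 2 + (p.1 ^ 2 + p.2 ^ 2 - 4) ^ 2 / 16)
        - (p.1 ^ 2 + p.2 ^ 2 - 4) / 8
    ¬ DifferentiableAt ℝ g ((2 : ℝ), (0 : ℝ)) ∧
    ¬ DifferentiableAt ℝ g ((-2 : ℝ), (0 : ℝ)) := by
  intro g
  have slice : ∀ a : ℝ, a ^ 2 = 4 →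
      (fun t => 2 * g (a, t) + t ^ 2 / 4) = fun t => √(t ^ 2 * (1 + t ^ 2 / 16)) := by
    intro a ha
    funext t
    simp only [g, ha]
    ring_nf
  have singular : ∀ a : ℝ, a ^ 2 = 4 → ¬ DifferentiableAt ℝ g (a, 0) := by
    intro a ha hg
    have hline : DifferentiableAt ℝ (fun t : ℝ => (a, t)) 0 := by fun_prop
    have hslice : DifferentiableAt ℝ (fun t => 2 * g (a, t) + t ^ 2 / 4) 0 :=
      ((hg.comp 0 hline).const_mul 2).add (by fun_prop)
    rw [slice a ha] at hslice
    exact not_differentiableAt_sqrt_sq_mul (u := fun t => 1 + t ^ 2 / 16) (by fun_prop)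
      (by norm_num) hslice
  exact ⟨singular 2 (by norm_num), singular (-2) (by norm_num)⟩
end

section
/- On the polynomial ring ℝ[X, Y, τ], define a bracket by {f, g} = (X² + Y² + 8τ − 4)·(∂_X f·∂_Y g − ∂_Y f·∂_X g) + 2(1−τ)Y·(∂_X f·∂_τ g − ∂_τ f·∂_X g) + 2τX·(∂_Y f·∂_τ g − ∂_τ f·∂_Y g), so that {X,Y} = X² + Y² + 4(2τ − 1), {X,τ} = 2(1−τ)Y, {Y,τ} = 2τX. Then this bracket satisfies the Jacobi identity for all polynomials, and the polynomial R = Y² − (X² + Y² + 4(τ−1))τ is a Casimir element: {f, R} = 0 for every polynomial f ∈ ℝ[X,Y,τ]. -/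
/-!
The canoe bracket is the Jacobian (Nambu) bracket `{f, g} = ∇C · (∇f × ∇g)` on `ℝ³`
of the polynomial `C = -R`. For any `C` such a bracket has `C` as a Casimir, since
`∇C · (∇f × ∇C) = 0`, and satisfies the Jacobi identity: expanding the Jacobiator
leaves only terms that cancel once second partial derivatives are known to commute.
-/

open MvPolynomial

/-- Variables: `0 ↦ X`, `1 ↦ Y`, `2 ↦ τ`. -/
noncomputable def canoeBracket (f g : MvPolynomial (Fin 3) ℝ) :
    MvPolynomial (Fin 3) ℝ :=
  (X 0 ^ 2 + X 1 ^ 2 + 8 * X 2 - 4) * (pderiv 0 f * pderiv 1 g - pderiv 1 f * pderiv 0 g)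
    + 2 * (1 - X 2) * X 1 * (pderiv 0 f * pderiv 2 g - pderiv 2 f * pderiv 0 g)
    + 2 * X 2 * X 0 * (pderiv 1 f * pderiv 2 g - pderiv 2 f * pderiv 1 g)

open Matrix

namespace MvPolynomial

@[simp]
theorem pderiv_ofNat {R σ : Type*} [CommSemiring R] (i : σ) (n : ℕ) [n.AtLeastTwo] :
    pderiv i (ofNat(n) : MvPolynomial σ R) = 0 := by
  rw [← map_ofNat (C : R →+* MvPolynomial σ R) n]
  exact pderiv_C

theorem pderiv_pderiv_comm {R σ : Type*} [CommSemiring R] (i j : σ) (f : MvPolynomial σ R) :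
    pderiv i (pderiv j f) = pderiv j (pderiv i f) := by
  classical
  induction f using MvPolynomial.induction_on with
  | C a => simp only [pderiv_C, map_zero]
  | add p q hp hq => simp only [map_add, hp, hq]
  | mul_X p k hp =>
    simp only [pderiv_mul, map_add, pderiv_X, hp, Pi.single_apply]
    split_ifs <;> simp only [pderiv_one, map_zero, mul_zero, add_zero, mul_one, add_right_comm]

section JacobianBracket

variable {R : Type*} [CommRing R]

noncomputable def grad {σ : Type*} (f : MvPolynomial σ R) : σ → MvPolynomial σ R :=
  fun i => pderiv i f

theorem grad_neg {σ : Type*} (f : MvPolynomial σ R) : grad (-f) = -grad f := by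
  funext i
  exact map_neg (pderiv i) f

noncomputable def jacobianBracket (C f g : MvPolynomial (Fin 3) R) : MvPolynomial (Fin 3) R :=
  grad C ⬝ᵥ grad f ⨯₃ grad g

theorem jacobianBracket_neg_right (C f g : MvPolynomial (Fin 3) R) :
    jacobianBracket C f (-g) = -jacobianBracket C f g := by
  rw [jacobianBracket, jacobianBracket, grad_neg, map_neg, dotProduct_neg]

theorem jacobianBracket_self_right (C f : MvPolynomial (Fin 3) R) :
    jacobianBracket C f C = 0 :=
  dot_cross_self (grad f) (grad C)

theorem jacobianBracket_jacobi (C f g h : MvPolynomial (Fin 3) R) :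
    jacobianBracket C f (jacobianBracket C g h) + jacobianBracket C g (jacobianBracket C h f)
      + jacobianBracket C h (jacobianBracket C f g) = 0 := by
  simp only [jacobianBracket, grad, cross_apply, vec3_dotProduct, cons_val, map_add, map_sub,
    pderiv_mul]
  simp only [pderiv_pderiv_comm (1 : Fin 3) 0, pderiv_pderiv_comm (2 : Fin 3) 0,
    pderiv_pderiv_comm (2 : Fin 3) 1]
  ring

end JacobianBracket

end MvPolynomial

noncomputable def canoeCasimir : MvPolynomial (Fin 3) ℝ :=
  (X 0 ^ 2 + X 1 ^ 2 + 4 * (X 2 - 1)) * X 2 - X 1 ^ 2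

theorem grad_canoeCasimir :
    grad canoeCasimir =
      ![2 * X 2 * X 0, -2 * (1 - X 2) * X 1, X 0 ^ 2 + X 1 ^ 2 + 8 * X 2 - 4] := by
  funext i
  fin_cases i <;>
    simp only [grad, canoeCasimir, map_add, map_sub, pderiv_mul, pderiv_pow, pderiv_X,
      pderiv_ofNat, pderiv_one, Pi.single_apply, Fin.reduceEq, ↓reduceIte, Fin.zero_eta,
      Fin.mk_one, Fin.reduceFinMk, cons_val] <;>
    ring

theorem canoeBracket_eq_jacobianBracket (f g : MvPolynomial (Fin 3) ℝ) :
    canoeBracket f g = jacobianBracket canoeCasimir f g := by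
  rw [jacobianBracket, grad_canoeCasimir, cross_apply, vec3_dotProduct]
  simp only [canoeBracket, grad, cons_val]
  ring

/-- The canoe bracket satisfies `{X,Y} = X² + Y² + 4(2τ − 1)`,
`{X,τ} = 2(1−τ)Y`, `{Y,τ} = 2τX`, obeys the Jacobi identity, and
`R = Y² − (X² + Y² + 4(τ−1))τ` is a Casimir element. -/
theorem canoeBracket_jacobi_and_casimir :
    canoeBracket (X 0) (X 1) = X 0 ^ 2 + X 1 ^ 2 + 4 * (2 * X 2 - 1) ∧
    canoeBracket (X 0) (X 2) = 2 * (1 - X 2) * X 1 ∧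
    canoeBracket (X 1) (X 2) = 2 * X 2 * X 0 ∧
    (∀ f g h : MvPolynomial (Fin 3) ℝ,
      canoeBracket f (canoeBracket g h) + canoeBracket g (canoeBracket h f)
        + canoeBracket h (canoeBracket f g) = 0) ∧
    (∀ f : MvPolynomial (Fin 3) ℝ,
      canoeBracket f (X 1 ^ 2 - (X 0 ^ 2 + X 1 ^ 2 + 4 * (X 2 - 1)) * X 2) = 0) := by
  refine ⟨?_, ?_, ?_, fun f g h => ?_, fun f => ?_⟩
  iterate 3
    · simp only [canoeBracket, pderiv_X, Pi.single_apply, Fin.reduceEq, ↓reduceIte]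
      ring
  · simp only [canoeBracket_eq_jacobianBracket]
    exact jacobianBracket_jacobi canoeCasimir f g h
  · rw [canoeBracket_eq_jacobianBracket, ← neg_sub, ← canoeCasimir, jacobianBracket_neg_right,
      jacobianBracket_self_right, neg_zero]
end

section
/- Let s ≥ 1 and let q, p ∈ ℝˢ. Set x = (|q|² − |p|²)/2, y = ⟨q, p⟩, and r = (|q|² + |p|²)/2. Then r ≥ 0 and x² + y² ≤ r², with equality x² + y² = r² if and only if qᵢpⱼ = qⱼpᵢ for all indices i, j (that is, the angular momentum q·pᵀ − p·qᵀ vanishes). Moreover, for every triple (x, y, r) ∈ ℝ³ with x² + y² = r² and r ≥ 0 there exists a pair (q, p) ∈ ℝˢ × ℝˢ with vanishing angular momentum realizing it. -/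
/-!
Lagrange's identity gives `r² - x² - y² = |q|²|p|² - ⟨q,p⟩² = ½ ∑ᵢⱼ (qᵢpⱼ - qⱼpᵢ)²`, which is
nonnegative and vanishes exactly when the angular momentum does. Conversely, in one dimension
`(a, b) ↦ (x + iy, r) = ((a + ib)² / 2, |a + ib|² / 2)` is onto the semicone, since complex
squaring is onto; a pair supported on one coordinate axis of `ℝˢ` realizes this.
-/

open RealInnerProductSpace

theorem Finset.sum_sum_mul_sub_mul_sq {ι R : Type*} [CommRing R] (s : Finset ι) (f g : ι → R) :
    ∑ i ∈ s, ∑ j ∈ s, (f i * g j - f j * g i) ^ 2 =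
      2 * ((∑ i ∈ s, f i ^ 2) * (∑ i ∈ s, g i ^ 2) - (∑ i ∈ s, f i * g i) ^ 2) := by
  calc ∑ i ∈ s, ∑ j ∈ s, (f i * g j - f j * g i) ^ 2
      = ∑ i ∈ s, ∑ j ∈ s, (f i ^ 2 * g j ^ 2 + f j ^ 2 * g i ^ 2 - 2 * (f i * g i) * (f j * g j)) :=
        sum_congr rfl fun i _ => sum_congr rfl fun j _ => by ring
    _ = _ := by
      simp only [sum_add_distrib, sum_sub_distrib, ← mul_sum, ← sum_mul]
      ring

namespace EuclideanSpace

variable {ι : Type*} [Fintype ι]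

theorem norm_sq_mul_norm_sq_sub_inner_sq (q p : EuclideanSpace ℝ ι) :
    ‖q‖ ^ 2 * ‖p‖ ^ 2 - ⟪q, p⟫ ^ 2 = (∑ i, ∑ j, (q i * p j - q j * p i) ^ 2) / 2 := by
  have hinner : ⟪q, p⟫ = ∑ i, q i * p i := by
    simp [PiLp.inner_apply, mul_comm]
  rw [real_norm_sq_eq, real_norm_sq_eq, hinner, Finset.sum_sum_mul_sub_mul_sq]
  ring

theorem inner_sq_eq_norm_sq_mul_norm_sq_iff (q p : EuclideanSpace ℝ ι) :
    ⟪q, p⟫ ^ 2 = ‖q‖ ^ 2 * ‖p‖ ^ 2 ↔ ∀ i j, q i * p j = q j * p i := by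
  rw [eq_comm, ← sub_eq_zero, norm_sq_mul_norm_sq_sub_inner_sq, div_eq_zero_iff]
  simp only [OfNat.ofNat_ne_zero, or_false, Fintype.sum_eq_zero_iff_of_nonneg
    (fun i => Finset.sum_nonneg fun j _ => sq_nonneg _), funext_iff, Pi.zero_apply,
    Fintype.sum_eq_zero_iff_of_nonneg (fun j => sq_nonneg _), sq_eq_zero_iff, sub_eq_zero]

end EuclideanSpace

theorem exists_sq_eq_add_sq_eq_sub_mul_eq {x y r : ℝ} (hcone : x ^ 2 + y ^ 2 = r ^ 2)
    (hr : 0 ≤ r) : ∃ a b : ℝ, a ^ 2 = r + x ∧ b ^ 2 = r - x ∧ a * b = y := by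
  have hrx : 0 ≤ r + x := by nlinarith [sq_nonneg y]
  rcases hrx.eq_or_lt with hrx | hrx
  · refine ⟨0, √(r - x), by linarith, Real.sq_sqrt (by linarith), ?_⟩
    nlinarith
  · refine ⟨√(r + x), y / √(r + x), Real.sq_sqrt hrx.le, ?_, by field_simp⟩
    rw [div_pow, Real.sq_sqrt hrx.le, div_eq_iff hrx.ne']
    nlinarith

/-- For a single particle in `ℝˢ` with position `q` and momentum `p`, the
invariants `x = (|q|² − |p|²)/2`, `y = ⟨q,p⟩`, `r = (|q|² + |p|²)/2` satisfy
`r ≥ 0`, `x² + y² ≤ r²`, with equality iff the angular momentum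
`q pᵀ − p qᵀ` vanishes; and every point of the semicone
`{x² + y² = r², r ≥ 0}` arises this way from a pair with zero angular
momentum. -/
theorem zero_angular_momentum_reduced_space (s : ℕ) (hs : 1 ≤ s) :
    (∀ q p : EuclideanSpace ℝ (Fin s),
      let x : ℝ := (‖q‖ ^ 2 - ‖p‖ ^ 2) / 2
      let y : ℝ := ⟪q, p⟫
      let r : ℝ := (‖q‖ ^ 2 + ‖p‖ ^ 2) / 2
      0 ≤ r ∧ x ^ 2 + y ^ 2 ≤ r ^ 2 ∧
        (x ^ 2 + y ^ 2 = r ^ 2 ↔ ∀ i j : Fin s, q i * p j = q j * p i)) ∧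
    (∀ x y r : ℝ, x ^ 2 + y ^ 2 = r ^ 2 → 0 ≤ r →
      ∃ q p : EuclideanSpace ℝ (Fin s),
        (∀ i j : Fin s, q i * p j = q j * p i) ∧
        (‖q‖ ^ 2 - ‖p‖ ^ 2) / 2 = x ∧ ⟪q, p⟫ = y ∧
        (‖q‖ ^ 2 + ‖p‖ ^ 2) / 2 = r) := by
  refine ⟨fun q p => ?_, fun x y r hcone hr => ?_⟩
  · have hdefect : ((‖q‖ ^ 2 + ‖p‖ ^ 2) / 2) ^ 2 - (((‖q‖ ^ 2 - ‖p‖ ^ 2) / 2) ^ 2 + ⟪q, p⟫ ^ 2)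
        = ‖q‖ ^ 2 * ‖p‖ ^ 2 - ⟪q, p⟫ ^ 2 := by ring
    have hcs : ⟪q, p⟫ ^ 2 ≤ ‖q‖ ^ 2 * ‖p‖ ^ 2 := by
      rw [← mul_pow, ← sq_abs]
      exact pow_le_pow_left₀ (abs_nonneg _) (abs_real_inner_le_norm q p) 2
    refine ⟨by positivity, by linarith, ?_⟩
    rw [← EuclideanSpace.inner_sq_eq_norm_sq_mul_norm_sq_iff]
    constructor <;> intro h <;> linarith
  · obtain ⟨a, b, ha, hb, hab⟩ := exists_sq_eq_add_sq_eq_sub_mul_eq hcone hr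
    let i₀ : Fin s := ⟨0, hs⟩
    refine ⟨EuclideanSpace.single i₀ a, EuclideanSpace.single i₀ b, fun i j => ?_, ?_, ?_, ?_⟩
    · by_cases hi : i = i₀ <;> by_cases hj : j = i₀ <;> simp [hi, hj, mul_comm]
    all_goals simp [EuclideanSpace.inner_single_left, ha, hb, hab]
end

section
/- Let s ≤ ℓ be positive integers and let S be a complex ℓ×ℓ matrix. Then S is symmetric (Sᵀ = S) with rank S ≤ s if and only if there exists a complex s×ℓ matrix A with S = Aᵀ·A. -/
/-!
A symmetric matrix over a field of characteristic not two is congruent to a diagonal one,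
`S = Pᵀ * diagonal d * P` with `P` invertible, because its bilinear form has an orthogonal basis.
Over `ℂ` each `d i` is a square `c i * c i`, so `S = Bᵀ * B` with `B = diagonal c * P`, and `B` has
exactly `rank S` nonzero rows. Zero rows contribute nothing to `Bᵀ * B`, so they may be dropped and
the remaining rows placed among any `s ≥ rank S` rows. Conversely `rank (Aᵀ * A) ≤ rank A ≤ s`.
-/

open Matrix Function

namespace Matrix

variable {m m' n R : Type*}

theorem transpose_submatrix_mul_submatrix_eq [Fintype m] [Fintype m'] [CommSemiring R]
    (A : Matrix m n R) {f : m' → m} (hf : Injective f) (hA : ∀ i ∉ Set.range f, A i = 0) :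
    (A.submatrix f id)ᵀ * A.submatrix f id = Aᵀ * A := by
  ext i j
  simp only [mul_apply, transpose_apply, submatrix_apply, id_eq]
  exact Fintype.sum_of_injective f hf _ _ (fun k hk => by simp [hA k hk]) fun _ => rfl

theorem exists_transpose_mul_self_eq_of_embedding [Fintype m] [Fintype m'] [CommSemiring R]
    (A : Matrix m n R) (f : m ↪ m') : ∃ A' : Matrix m' n R, A'ᵀ * A' = Aᵀ * A := by
  refine ⟨of (extend f (fun i => A i) 0), ?_⟩
  have hsub : (of (extend f (fun i => A i) 0)).submatrix f id = A := by
    ext i j; simp [f.injective.extend_apply]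
  conv_rhs => rw [← hsub]
  exact (transpose_submatrix_mul_submatrix_eq _ f.injective
    fun _ hi => extend_apply' (f := f) (fun i => A i) 0 _ hi).symm

theorem IsSymm.exists_eq_transpose_mul_diagonal_mul {K : Type*} [Field K] [NeZero (2 : K)]
    [Fintype n] [DecidableEq n] {S : Matrix n n K} (hS : S.IsSymm) :
    ∃ (P : Matrix n n K) (d : n → K), IsUnit P.det ∧ S = Pᵀ * diagonal d * P := by
  have := invertibleOfNonzero (NeZero.ne (2 : K))
  obtain ⟨v, hv⟩ := LinearMap.BilinForm.exists_orthogonal_basis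
    (LinearMap.BilinForm.isSymm_iff.1 (isSymm_toBilin'_iff_isSymm.mpr hS))
  let w := v.reindex (v.indexEquiv (Pi.basisFun K n))
  have hw : LinearMap.BilinForm.toMatrix w S.toBilin' =
      diagonal fun i => S.toBilin' (w i) (w i) := by
    ext i j
    rcases eq_or_ne i j with rfl | hij
    · simp [LinearMap.BilinForm.toMatrix_apply]
    · rw [LinearMap.BilinForm.toMatrix_apply, diagonal_apply_ne _ hij]
      simpa [w] using hv (fun h => hij (by simpa using h))
  refine ⟨w.toMatrix (Pi.basisFun K n), fun i => S.toBilin' (w i) (w i), ?_, ?_⟩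
  · have := w.invertibleToMatrix (Pi.basisFun K n)
    exact isUnit_det_of_invertible _
  · rw [← hw, LinearMap.BilinForm.toMatrix_mul_basis_toMatrix,
      LinearMap.BilinForm.toMatrix_basisFun, LinearMap.BilinForm.toMatrix'_toBilin']

theorem IsSymm.exists_eq_transpose_mul_self {K : Type*} [Field K] [IsAlgClosed K]
    [NeZero (2 : K)] [Fintype n] [DecidableEq n] {S : Matrix n n K} (hS : S.IsSymm) :
    ∃ A : Matrix (Fin S.rank) n K, S = Aᵀ * A := by
  classical
  obtain ⟨P, d, hP, rfl⟩ := hS.exists_eq_transpose_mul_diagonal_mul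
  choose c hc using fun i => IsAlgClosed.exists_pow_nat_eq (d i) two_pos
  obtain rfl : d = fun i => c i * c i := funext fun i => by rw [← hc i, sq]
  set B := diagonal c * P
  have hB : Pᵀ * diagonal (fun i => c i * c i) * P = Bᵀ * B := by
    simp only [B, transpose_mul, diagonal_transpose, Matrix.mul_assoc, ← diagonal_mul_diagonal]
  have hrank : (Pᵀ * diagonal (fun i => c i * c i) * P).rank = Fintype.card {i // c i ≠ 0} := by
    rw [rank_mul_eq_left_of_isUnit_det _ _ hP,
      rank_mul_eq_right_of_isUnit_det _ _ (by rwa [det_transpose]), rank_diagonal]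
    simp only [ne_eq, mul_self_eq_zero]
  let A₀ := B.submatrix (Subtype.val : {i // c i ≠ 0} → n) id
  have hA₀ : A₀ᵀ * A₀ = Bᵀ * B := by
    refine transpose_submatrix_mul_submatrix_eq B Subtype.val_injective fun i hi => ?_
    have hci : c i = 0 := not_not.mp fun h => hi ⟨⟨i, h⟩, rfl⟩
    ext j
    simp [B, hci]
  obtain ⟨A, hA⟩ := exists_transpose_mul_self_eq_of_embedding A₀
    (Fintype.equivFinOfCardEq hrank.symm).toEmbedding
  exact ⟨A, hB.trans (hA.trans hA₀).symm⟩

end Matrix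

theorem symmetric_rank_le_iff_factor_general (s ℓ : ℕ)
    (S : Matrix (Fin ℓ) (Fin ℓ) ℂ) :
    (S.transpose = S ∧ S.rank ≤ s) ↔
      ∃ A : Matrix (Fin s) (Fin ℓ) ℂ, S = A.transpose * A := by
  constructor
  · rintro ⟨hsymm, hrank⟩
    obtain ⟨A, hA⟩ := IsSymm.exists_eq_transpose_mul_self hsymm
    obtain ⟨A', hA'⟩ := exists_transpose_mul_self_eq_of_embedding A (Fin.castLEEmb hrank)
    exact ⟨A', hA.trans hA'.symm⟩
  · rintro ⟨A, rfl⟩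
    exact ⟨by rw [transpose_mul, transpose_transpose],
      (rank_mul_le_right _ _).trans A.rank_le_height⟩

/-- A complex `ℓ×ℓ` matrix is symmetric of rank at most `s` iff it factors as
`Aᵀ·A` for some complex `s×ℓ` matrix `A`.  This identifies the image of the
closure of the `s`-th holomorphic nilpotent orbit in `𝔰𝔭(ℓ,ℝ)` under the
projection to `Sym²(ℂ^ℓ)`. -/
theorem symmetric_rank_le_iff_factor (s ℓ : ℕ) (hs : 1 ≤ s) (hsl : s ≤ ℓ)
    (S : Matrix (Fin ℓ) (Fin ℓ) ℂ) :
    (S.transpose = S ∧ S.rank ≤ s) ↔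
      ∃ A : Matrix (Fin s) (Fin ℓ) ℂ, S = A.transpose * A :=
  symmetric_rank_le_iff_factor_general s ℓ S
end

section
/- Define F(t) = (Σ_{n≥1} (−1)^{n+1}·n²·e^{−t·n²}) / (Σ_{n≥1} n²·e^{−t·n²}) for t > 0. Then F(t) → 1 as t → ∞. In particular, the tunneling probability |⟨ψ₊,ψ₋⟩|² = F(t)² tends to 1 as t → ∞. -/
open Filter Real Topology

/-!
After multiplying numerator and denominator by `e^t`, the `n`-th term becomes
`n² e^{-t(n²-1)}`, which is constant for `n = 1` and decays to `0` for `n ≥ 2`.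
For `t ≥ 1` it is dominated by the summable `e · n² e^{-n}`, so by dominated convergence
both rescaled sums tend to their `n = 1` coefficient, which is `1` in each case.
-/

lemma sq_mul_exp_neg_mul_sq_sub_one_le {t : ℝ} (ht : 1 ≤ t) (k : ℕ) :
    (k : ℝ) ^ 2 * exp (-t * ((k : ℝ) ^ 2 - 1)) ≤ exp 1 * ((k : ℝ) ^ 2 * exp (-1 * k)) := by
  rcases Nat.eq_zero_or_pos k with rfl | hk
  · simp
  have hk : (1 : ℝ) ≤ k := by exact_mod_cast hk
  have hexp : -t * ((k : ℝ) ^ 2 - 1) ≤ 1 + -1 * k := by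
    nlinarith [mul_le_mul_of_nonneg_right ht (by nlinarith : (0 : ℝ) ≤ (k : ℝ) ^ 2 - 1)]
  calc (k : ℝ) ^ 2 * exp (-t * ((k : ℝ) ^ 2 - 1)) ≤ (k : ℝ) ^ 2 * exp (1 + -1 * k) := by
        gcongr
    _ = exp 1 * ((k : ℝ) ^ 2 * exp (-1 * k)) := by rw [exp_add]; ring

lemma tendsto_sq_mul_exp_neg_mul_sq_sub_one (k : ℕ) :
    Tendsto (fun t : ℝ => (k : ℝ) ^ 2 * exp (-t * ((k : ℝ) ^ 2 - 1))) atTop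
      (𝓝 (if k = 1 then 1 else 0)) := by
  rcases lt_trichotomy k 1 with hk | rfl | hk
  · simp [Nat.lt_one_iff.mp hk]
  · simp
  have hk : (1 : ℝ) < (k : ℝ) ^ 2 := by
    have : (1 : ℝ) < k := by exact_mod_cast hk
    nlinarith
  have hdecay : Tendsto (fun t : ℝ => exp (-t * ((k : ℝ) ^ 2 - 1))) atTop (𝓝 0) := by
    refine tendsto_exp_atBot.comp ?_
    simp_rw [neg_mul]
    exact tendsto_neg_atTop_atBot.comp (tendsto_id.atTop_mul_const (sub_pos.mpr hk))
  rw [if_neg (by omega)]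
  simpa using hdecay.const_mul ((k : ℝ) ^ 2)

theorem tendsto_exp_mul_tsum_mul_sq_mul_exp_neg_mul_sq {s : ℕ → ℝ} {C : ℝ}
    (hs : ∀ n, |s n| ≤ C) :
    Tendsto (fun t : ℝ => exp t * ∑' n : ℕ, s n * (n : ℝ) ^ 2 * exp (-t * (n : ℝ) ^ 2))
      atTop (𝓝 (s 1)) := by
  have hrescale : ∀ t : ℝ,
      exp t * ∑' n : ℕ, s n * (n : ℝ) ^ 2 * exp (-t * (n : ℝ) ^ 2) =
        ∑' n : ℕ, s n * ((n : ℝ) ^ 2 * exp (-t * ((n : ℝ) ^ 2 - 1))) := fun t => by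
    rw [← tsum_mul_left]
    congr 1 with n
    rw [show -t * ((n : ℝ) ^ 2 - 1) = t + -t * (n : ℝ) ^ 2 by ring, exp_add]
    ring
  have hdom : ∀ᶠ t : ℝ in atTop, ∀ n : ℕ,
      ‖s n * ((n : ℝ) ^ 2 * exp (-t * ((n : ℝ) ^ 2 - 1)))‖ ≤
        C * (exp 1 * ((n : ℝ) ^ 2 * exp (-1 * n))) := by
    filter_upwards [eventually_ge_atTop 1] with t ht n
    rw [norm_mul, norm_of_nonneg (mul_nonneg (sq_nonneg _) (exp_nonneg _)), norm_eq_abs]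
    exact mul_le_mul (hs n) (sq_mul_exp_neg_mul_sq_sub_one_le ht n) (by positivity)
      ((abs_nonneg _).trans (hs n))
  have hlim := tendsto_tsum_of_dominated_convergence
    (((summable_pow_mul_exp_neg_nat_mul 2 one_pos).mul_left (exp 1)).mul_left C)
    (fun n => (tendsto_sq_mul_exp_neg_mul_sq_sub_one n).const_mul (s n)) hdom
  simp_rw [mul_ite, mul_one, mul_zero, tsum_ite_eq] at hlim
  simpa only [hrescale] using hlim

/-- The tunneling amplitude
`F(t) = (Σ_{n≥1}(−1)^{n+1}n²e^{−tn²})/(Σ_{n≥1}n²e^{−tn²})` tends to `1` as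
`t → ∞`; in particular the tunneling probability `F(t)²` tends to `1`. -/
theorem tunneling_probability_tendsto_one :
    let F : ℝ → ℝ := fun t =>
      (∑' n : ℕ, (-1 : ℝ) ^ (n + 1) * (n : ℝ) ^ 2 * Real.exp (-t * (n : ℝ) ^ 2)) /
        (∑' n : ℕ, (n : ℝ) ^ 2 * Real.exp (-t * (n : ℝ) ^ 2))
    Tendsto F atTop (nhds 1) ∧ Tendsto (fun t => (F t) ^ 2) atTop (nhds 1) := by
  intro F
  have hnum := tendsto_exp_mul_tsum_mul_sq_mul_exp_neg_mul_sq
    (s := fun n => (-1 : ℝ) ^ (n + 1)) (C := 1) (fun n => by simp)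
  have hden := tendsto_exp_mul_tsum_mul_sq_mul_exp_neg_mul_sq (s := fun _ => (1 : ℝ))
    (C := 1) (fun _ => abs_one.le)
  simp only [one_mul] at hden
  have hF : Tendsto F atTop (𝓝 1) := by
    have hquot := hnum.div hden one_ne_zero
    rw [show (-1 : ℝ) ^ (1 + 1) / 1 = 1 by norm_num] at hquot
    exact hquot.congr fun t => mul_div_mul_left _ _ (exp_ne_zero t)
  exact ⟨hF, by simpa using hF.pow 2⟩
end

section
/- Define F(t) = (Σ_{n≥1} (−1)^{n+1}·n²·e^{−t·n²}) / (Σ_{n≥1} n²·e^{−t·n²}) for t > 0. Then F(t) → 0 as t → 0⁺. In particular, the tunneling probability |⟨ψ₊,ψ₋⟩|² = F(t)² vanishes in the semiclassical limit t → 0. -/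
open Filter

/-! Write `n² e^{-tn²} = g(n²)` with `g(x) = x e^{-tx}`. Since `g` increases on `[0, 1/t]`,
decreases on `[1/t, ∞)` and is bounded by `1/t`, the alternating numerator is at most the sum
of the two largest terms, so it is `O(1/t)`. The denominator has about `t^{-1/2}` terms with
`n² ≤ 1/t`, each at least `n²/e`, so it is at least of order `t^{-3/2}`. Hence
`|F(t)| = O(√t)`. -/

open Real Topology

lemma mul_exp_neg_mul_le_inv {t : ℝ} (ht : 0 < t) (x : ℝ) : x * exp (-t * x) ≤ t⁻¹ := by
  calc x * exp (-t * x) = t⁻¹ * (t * x * exp (-(t * x))) := by field_simp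
    _ ≤ t⁻¹ * 1 := by
      gcongr
      exact (mul_exp_neg_le_exp_neg_one _).trans (exp_le_one_iff.2 (by norm_num))
    _ = t⁻¹ := mul_one _

lemma monotoneOn_mul_exp_neg_mul {t : ℝ} (ht : 0 < t) :
    MonotoneOn (fun x => x * exp (-t * x)) (Set.Icc 0 t⁻¹) := by
  rintro x ⟨hx, -⟩ y ⟨-, hy⟩ hxy
  have hty : t * y ≤ 1 :=
    calc t * y ≤ t * t⁻¹ := by gcongr
      _ = 1 := mul_inv_cancel₀ ht.ne'
  have key : x ≤ y * exp (-t * (y - x)) :=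
    calc x ≤ y * (1 - t * (y - x)) := by nlinarith
      _ ≤ y * exp (-t * (y - x)) := by
        gcongr
        · linarith
        · linarith [add_one_le_exp (-t * (y - x))]
  calc x * exp (-t * x) ≤ y * exp (-t * (y - x)) * exp (-t * x) := by gcongr
    _ = y * exp (-t * y) := by rw [mul_assoc, ← exp_add]; ring_nf

lemma antitoneOn_mul_exp_neg_mul {t : ℝ} (ht : 0 < t) :
    AntitoneOn (fun x => x * exp (-t * x)) (Set.Ici t⁻¹) := by
  rintro x hx y - hxy
  have htx : 1 ≤ t * x := (inv_le_iff_one_le_mul₀' ht).1 hx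
  have key : y ≤ x * exp (t * (y - x)) :=
    calc y ≤ x * (1 + t * (y - x)) := by nlinarith
      _ ≤ x * exp (t * (y - x)) := by
        gcongr
        · nlinarith
        · linarith [add_one_le_exp (t * (y - x))]
  calc y * exp (-t * y) ≤ x * exp (t * (y - x)) * exp (-t * y) := by gcongr
    _ = x * exp (-t * x) := by rw [mul_assoc, ← exp_add]; ring_nf

lemma abs_sum_range_succ_neg_one_pow_mul_le {f : ℕ → ℝ} {N : ℕ} (hf0 : 0 ≤ f 0)
    (hf : MonotoneOn f (Set.Iic N)) :
    |∑ n ∈ Finset.range (N + 1), (-1) ^ n * f n| ≤ f N := by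
  suffices h : 0 ≤ (-1) ^ N * ∑ n ∈ Finset.range (N + 1), (-1) ^ n * f n ∧
      (-1) ^ N * ∑ n ∈ Finset.range (N + 1), (-1) ^ n * f n ≤ f N by
    have habs : |∑ n ∈ Finset.range (N + 1), (-1) ^ n * f n| =
        |(-1) ^ N * ∑ n ∈ Finset.range (N + 1), (-1) ^ n * f n| := by
      rw [abs_mul, abs_neg_one_pow, one_mul]
    rw [habs, abs_of_nonneg h.1]
    exact h.2
  induction N with
  | zero => simpa using hf0
  | succ N ih =>
    obtain ⟨h0, h1⟩ := ih (hf.mono (Set.Iic_subset_Iic.2 N.le_succ))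
    have hstep : f N ≤ f (N + 1) := hf (by simp) (by simp) N.le_succ
    have e : (-1) ^ (N + 1) * ∑ n ∈ Finset.range (N + 1 + 1), (-1) ^ n * f n =
        f (N + 1) - (-1) ^ N * ∑ n ∈ Finset.range (N + 1), (-1) ^ n * f n := by
      rw [Finset.sum_range_succ, mul_add, ← mul_assoc, ← pow_add, ← two_mul, pow_mul]
      simp only [pow_succ, mul_neg, mul_one, neg_mul, even_two, Even.neg_pow, one_pow, one_mul]
      ring
    rw [e]
    constructor <;> linarith

lemma abs_tsum_neg_one_pow_mul_le_of_unimodal {f : ℕ → ℝ} {N : ℕ} (hf0 : 0 ≤ f 0)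
    (hs : Summable f) (hmono : MonotoneOn f (Set.Iic N))
    (hanti : AntitoneOn f (Set.Ici (N + 1))) :
    |∑' n, (-1) ^ n * f n| ≤ f N + f (N + 1) := by
  have htail : Antitone fun m => f (m + (N + 1)) := fun a b hab =>
    hanti (by simp) (by simp) (by omega)
  have htail_bound : |∑' m, (-1) ^ m * f (m + (N + 1))| ≤ f (N + 1) := by
    simpa using alternating_series_error_bound _ htail ((summable_nat_add_iff _).2 hs) 0
  have htail_eq : ∑' m, (-1) ^ (m + (N + 1)) * f (m + (N + 1)) =
      (-1) ^ (N + 1) * ∑' m, (-1) ^ m * f (m + (N + 1)) := by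
    rw [← tsum_mul_left]
    congr 1 with m
    ring
  rw [← hs.alternating.sum_add_tsum_nat_add (N + 1)]
  calc _ ≤ |∑ n ∈ Finset.range (N + 1), (-1) ^ n * f n| +
        |∑' m, (-1) ^ (m + (N + 1)) * f (m + (N + 1))| := abs_add_le _ _
    _ ≤ f N + f (N + 1) := by
      rw [htail_eq, abs_mul, abs_neg_one_pow, one_mul]
      exact add_le_add (abs_sum_range_succ_neg_one_pow_mul_le hf0 hmono) htail_bound

lemma exists_nat_sq_le_lt_succ_sq {x : ℝ} (hx : 0 ≤ x) :
    ∃ N : ℕ, (N : ℝ) ^ 2 ≤ x ∧ x < ((N : ℝ) + 1) ^ 2 :=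
  ⟨⌊√x⌋₊, (Real.le_sqrt (by positivity) hx).1 (Nat.floor_le (sqrt_nonneg x)),
    (Real.sqrt_lt' (by positivity)).1 (Nat.lt_floor_add_one _)⟩

lemma summable_sq_mul_exp_neg_mul_sq {t : ℝ} (ht : 0 < t) :
    Summable fun n : ℕ => (n : ℝ) ^ 2 * exp (-t * (n : ℝ) ^ 2) := by
  refine (summable_pow_mul_exp_neg_nat_mul 2 ht).of_nonneg_of_le (fun n => by positivity)
    fun n => ?_
  have hn : (n : ℝ) ≤ (n : ℝ) ^ 2 := by exact_mod_cast Nat.le_self_pow two_ne_zero n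
  exact mul_le_mul_of_nonneg_left (exp_le_exp.2 (by nlinarith)) (by positivity)

lemma abs_tsum_neg_one_pow_succ_mul_sq_mul_exp_le {t : ℝ} (ht : 0 < t) :
    |∑' n : ℕ, (-1 : ℝ) ^ (n + 1) * (n : ℝ) ^ 2 * exp (-t * (n : ℝ) ^ 2)| ≤ 2 * t⁻¹ := by
  obtain ⟨N, hN, hN1⟩ := exists_nat_sq_le_lt_succ_sq (inv_nonneg.2 ht.le)
  set g : ℝ → ℝ := fun x => x * exp (-t * x)
  have hmono : MonotoneOn (fun n : ℕ => g ((n : ℝ) ^ 2)) (Set.Iic N) := by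
    intro a ha b hb hab
    have hb' : (b : ℝ) ^ 2 ≤ t⁻¹ := le_trans (by gcongr; exact_mod_cast hb) hN
    exact monotoneOn_mul_exp_neg_mul ht ⟨by positivity, (by gcongr : (a : ℝ) ^ 2 ≤ b ^ 2).trans hb'⟩
      ⟨by positivity, hb'⟩ (by gcongr)
  have hanti : AntitoneOn (fun n : ℕ => g ((n : ℝ) ^ 2)) (Set.Ici (N + 1)) := by
    intro a ha b hb hab
    have ha' : t⁻¹ ≤ (a : ℝ) ^ 2 := hN1.le.trans (by gcongr; exact_mod_cast ha)
    exact antitoneOn_mul_exp_neg_mul ht ha' (ha'.trans (by gcongr)) (by gcongr)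
  calc |∑' n : ℕ, (-1 : ℝ) ^ (n + 1) * (n : ℝ) ^ 2 * exp (-t * (n : ℝ) ^ 2)|
      = |∑' n : ℕ, (-1) ^ n * g ((n : ℝ) ^ 2)| := by
        rw [← abs_neg, ← tsum_neg]
        exact congrArg abs (tsum_congr fun n => by simp only [g]; ring)
    _ ≤ g ((N : ℝ) ^ 2) + g (((N + 1 : ℕ) : ℝ) ^ 2) :=
        abs_tsum_neg_one_pow_mul_le_of_unimodal (by simp [g]) (summable_sq_mul_exp_neg_mul_sq ht)
          hmono hanti
    _ ≤ t⁻¹ + t⁻¹ := add_le_add (mul_exp_neg_mul_le_inv ht _) (mul_exp_neg_mul_le_inv ht _)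
    _ = 2 * t⁻¹ := by ring

lemma cube_div_three_le_sum_range_succ_sq (N : ℕ) :
    (N : ℝ) ^ 3 / 3 ≤ ∑ n ∈ Finset.range (N + 1), (n : ℝ) ^ 2 := by
  induction N with
  | zero => simp
  | succ N ih =>
    rw [Finset.sum_range_succ]
    push_cast
    nlinarith [N.cast_nonneg (α := ℝ)]

lemma cube_div_three_mul_exp_neg_one_le_tsum_sq_mul_exp {t : ℝ} (ht : 0 < t) {N : ℕ}
    (hN : (N : ℝ) ^ 2 ≤ t⁻¹) :
    (N : ℝ) ^ 3 / 3 * exp (-1) ≤ ∑' n : ℕ, (n : ℝ) ^ 2 * exp (-t * (n : ℝ) ^ 2) := by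
  calc (N : ℝ) ^ 3 / 3 * exp (-1) ≤ ∑ n ∈ Finset.range (N + 1), (n : ℝ) ^ 2 * exp (-1) := by
        rw [← Finset.sum_mul]
        gcongr
        exact cube_div_three_le_sum_range_succ_sq N
    _ ≤ ∑ n ∈ Finset.range (N + 1), (n : ℝ) ^ 2 * exp (-t * (n : ℝ) ^ 2) := by
        refine Finset.sum_le_sum fun n hn => ?_
        have hnN : (n : ℝ) ^ 2 ≤ t⁻¹ :=
          le_trans (by gcongr; exact_mod_cast Finset.mem_range_succ_iff.1 hn) hN
        have htn : t * (n : ℝ) ^ 2 ≤ 1 :=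
          calc t * (n : ℝ) ^ 2 ≤ t * t⁻¹ := by gcongr
            _ = 1 := mul_inv_cancel₀ ht.ne'
        gcongr
        linarith
    _ ≤ _ := (summable_sq_mul_exp_neg_mul_sq ht).sum_le_tsum _ fun n _ => by positivity

noncomputable def tunnelingAmplitude (t : ℝ) : ℝ :=
  (∑' n : ℕ, (-1 : ℝ) ^ (n + 1) * (n : ℝ) ^ 2 * Real.exp (-t * (n : ℝ) ^ 2)) /
    (∑' n : ℕ, (n : ℝ) ^ 2 * Real.exp (-t * (n : ℝ) ^ 2))

lemma abs_tunnelingAmplitude_le {t : ℝ} (ht : 0 < t) (ht1 : t ≤ 1) :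
    |tunnelingAmplitude t| ≤ 48 * exp 1 * √t := by
  obtain ⟨N, hN, hN1⟩ := exists_nat_sq_le_lt_succ_sq (inv_nonneg.2 ht.le)
  have hN0 : N ≠ 0 := by
    rintro rfl
    norm_num at hN1
    linarith [(one_le_inv₀ ht).2 ht1]
  have hN_one : (1 : ℝ) ≤ N := by exact_mod_cast Nat.one_le_iff_ne_zero.2 hN0
  have hB := cube_div_three_mul_exp_neg_one_le_tsum_sq_mul_exp ht hN
  have hBpos : 0 < ∑' n : ℕ, (n : ℝ) ^ 2 * exp (-t * (n : ℝ) ^ 2) :=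
    lt_of_lt_of_le (by positivity) hB
  have hsq : √t ^ 2 = t := sq_sqrt ht.le
  have h4 : 1 < (2 * N * √t) ^ 2 := by
    have : t⁻¹ < 4 * N ^ 2 := hN1.trans_le (by nlinarith)
    rw [inv_lt_iff_one_lt_mul₀' ht] at this
    nlinarith
  have hkey : 1 ≤ 8 * t * √t * N ^ 3 := by
    have h2 : 1 ≤ 2 * N * √t := (one_lt_sq_iff₀ (by positivity)).1 h4 |>.le
    calc (1 : ℝ) ≤ (2 * N * √t) ^ 3 := one_le_pow₀ h2
      _ = 8 * √t ^ 2 * √t * N ^ 3 := by ring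
      _ = 8 * t * √t * N ^ 3 := by rw [hsq]
  rw [tunnelingAmplitude, abs_div, abs_of_pos hBpos, div_le_iff₀ hBpos]
  calc _ ≤ 2 * t⁻¹ := abs_tsum_neg_one_pow_succ_mul_sq_mul_exp_le ht
    _ ≤ 2 * t⁻¹ * (8 * t * √t * N ^ 3) := le_mul_of_one_le_right (by positivity) hkey
    _ = 48 * exp 1 * √t * ((N : ℝ) ^ 3 / 3 * exp (-1)) := by
        rw [exp_neg]
        field_simp
        ring
    _ ≤ _ := by gcongr

/-- The tunneling amplitude
`F(t) = (Σ_{n≥1}(−1)^{n+1}n²e^{−tn²})/(Σ_{n≥1}n²e^{−tn²})` tends to `0` in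
the semiclassical limit `t → 0⁺`; in particular the tunneling probability
`F(t)²` vanishes in this limit. -/
theorem tunneling_probability_tendsto_zero_semiclassical :
    let F : ℝ → ℝ := fun t =>
      (∑' n : ℕ, (-1 : ℝ) ^ (n + 1) * (n : ℝ) ^ 2 * Real.exp (-t * (n : ℝ) ^ 2)) /
        (∑' n : ℕ, (n : ℝ) ^ 2 * Real.exp (-t * (n : ℝ) ^ 2))
    Tendsto F (nhdsWithin 0 (Set.Ioi 0)) (nhds 0) ∧
    Tendsto (fun t => (F t) ^ 2) (nhdsWithin 0 (Set.Ioi 0)) (nhds 0) := by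
  have hsqrt : Tendsto (fun t => 48 * exp 1 * √t) (𝓝[>] 0) (𝓝 0) := by
    simpa using ((continuous_sqrt.tendsto 0).const_mul (48 * exp 1)).mono_left nhdsWithin_le_nhds
  have hF : Tendsto tunnelingAmplitude (𝓝[>] 0) (𝓝 0) := by
    refine squeeze_zero_norm' ?_ hsqrt
    filter_upwards [Ioc_mem_nhdsGT one_pos] with t ⟨ht, ht1⟩
    exact abs_tunnelingAmplitude_le ht ht1
  have hF2 := hF.pow 2
  rw [zero_pow two_ne_zero] at hF2
  exact ⟨hF, hF2⟩
end

section
/- Let A be a commutative ℝ-algebra equipped with an ℝ-bilinear bracket {·,·} : A × A → A that is antisymmetric, satisfies the Jacobi identity, and satisfies the Leibniz rule {a, bc} = {a,b}·c + b·{a,c} (a Poisson algebra). Then there exists an ℝ-bilinear bracket [·,·] on the A-module Ω_{A/ℝ} of Kähler differentials such that: (1) [a·du, b·dv] = a{u,b}·dv + b{a,v}·du + ab·d{u,v} for all a, b, u, v ∈ A; (2) [·,·] satisfies the Jacobi identity, making Ω_{A/ℝ} a Lie algebra over ℝ; (3) with π♯ : Ω_{A/ℝ} → Der(A) the A-linear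 map determined by π♯(du) = {u,·}, one has [α, a·β] = π♯(α)(a)·β + a·[α,β] for all α, β ∈ Ω_{A/ℝ} and a ∈ A; and (4) π♯([α,β]) = [π♯(α), π♯(β)] as derivations of A. -/
/-!
The bracket is the Koszul bracket `[α, β] = L_{π♯α} β - L_{π♯β} α - d π(α, β)` of the Poisson
bivector `π(du, dv) = {u, v}`, where `L_X (a du) = X a du + a d(X u)` is the Lie derivative of
Kähler forms along a derivation `X`. Only `L_X` has to be shown to respect the relations defining
`Ω[A⁄R]`; everything else is built from it and from the universal property of `Ω[A⁄R]`.

Skew-symmetry of `π` makes the bracket skew and gives the Leibniz rule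
`[α, a β] = π♯α (a) β + a [α, β]`, and the Jacobi identity of `{·,·}` says that
`u ↦ {u, ·}` maps `{u, v}` to the commutator of derivations. With these, the failure of `π♯` to be
a bracket morphism and the Jacobiator are both `A`-linear in each argument, so they vanish because
they vanish on exact forms `du, dv, dw`.
-/

open Finsupp (linearCombination single)

section

variable {R A : Type*} [CommRing R] [CommRing A] [Algebra R A]

noncomputable def biderivationOfSkew (P : A →ₗ[R] A →ₗ[R] A) (hanti : ∀ a b, P a b = -P b a)
    (hleibniz : ∀ a b c, P a (b * c) = P a b * c + b * P a c) :
    Derivation R A (Derivation R A A) :=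
  Derivation.mk'
    { toFun u := Derivation.mk' (P u) fun b c => by rw [hleibniz, smul_eq_mul, smul_eq_mul]; ring
      map_add' u v := by ext; simp
      map_smul' r u := by ext; simp }
    fun a b => by
      ext c
      simp only [LinearMap.coe_mk, AddHom.coe_mk, Derivation.coe_mk', Derivation.coe_add,
        Derivation.coe_smul, Pi.add_apply, Pi.smul_apply, smul_eq_mul]
      rw [hanti, hleibniz, hanti c a, hanti c b]
      ring

@[simp]
theorem biderivationOfSkew_apply_apply (P : A →ₗ[R] A →ₗ[R] A) (hanti : ∀ a b, P a b = -P b a)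
    (hleibniz : ∀ a b c, P a (b * c) = P a b * c + b * P a c) (u v : A) :
    biderivationOfSkew P hanti hleibniz u v = P u v := rfl

theorem Derivation.lie_apply_apply_of_jacobi {H : Derivation R A (Derivation R A A)}
    (hH : ∀ u v, H u v = -H v u) (hJ : ∀ u v w, H u (H v w) + H v (H w u) + H w (H u v) = 0)
    (u v : A) : ⁅H u, H v⁆ = H (H u v) := by
  ext w
  have jacobi := hJ u v w
  rw [hH w u, map_neg] at jacobi
  rw [Derivation.commutator_apply, hH (H u v) w]
  linear_combination jacobi

end

namespace KaehlerDifferential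

variable {R A M : Type*} [CommRing R] [CommRing A] [Algebra R A] [AddCommGroup M] [Module R M]

@[elab_as_elim]
theorem span_induction {p : Ω[A⁄R] → Prop} (ω : Ω[A⁄R]) (hD : ∀ u, p (D R A u))
    (hadd : ∀ x y, p x → p y → p (x + y)) (hsmul : ∀ (a : A) x, p x → p (a • x)) : p ω := by
  have hω : ω ∈ Submodule.span A (Set.range (D R A)) := by simp [span_range_derivation]
  induction hω using Submodule.span_induction with
  | mem x hx => obtain ⟨u, rfl⟩ := hx; exact hD u
  | zero => simpa using hsmul 0 _ (hD 0)
  | add x y _ _ hx hy => exact hadd x y hx hy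
  | smul a x _ hx => exact hsmul a x hx

noncomputable def liftOfLinearCombination (f : (A →₀ A) →ₗ[R] M)
    (hf : ∀ η, linearCombination A (D R A) η = 0 → f η = 0) : Ω[A⁄R] →ₗ[R] M :=
  (LinearMap.ker ((linearCombination A (D R A)).restrictScalars R)).liftQ f (fun η ↦ hf η) ∘ₗ
    (((linearCombination A (D R A)).restrictScalars R).quotKerEquivOfSurjective
      (linearCombination_surjective R A)).symm

@[simp]
theorem liftOfLinearCombination_linearCombination (f : (A →₀ A) →ₗ[R] M)
    (hf : ∀ η, linearCombination A (D R A) η = 0 → f η = 0) (η : A →₀ A) :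
    liftOfLinearCombination f hf (linearCombination A (D R A) η) = f η := by
  rw [liftOfLinearCombination, LinearMap.comp_apply, LinearEquiv.coe_coe]
  exact congrArg _ (LinearMap.quotKerEquivOfSurjective_symm_apply _ _ η)

noncomputable def lieDerivativeFinsupp (X : Derivation R A A) : (A →₀ A) →ₗ[R] Ω[A⁄R] :=
  Finsupp.lsum R fun v =>
    X.toLinearMap.smulRight (D R A v) + LinearMap.id.smulRight (D R A (X v))

@[simp]
theorem lieDerivativeFinsupp_single (X : Derivation R A A) (v b : A) :
    lieDerivativeFinsupp X (single v b) = X b • D R A v + b • D R A (X v) := by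
  simp [lieDerivativeFinsupp]

theorem lieDerivativeFinsupp_smul (X : Derivation R A A) (c : A) (η : A →₀ A) :
    lieDerivativeFinsupp X (c • η)
      = X c • linearCombination A (D R A) η + c • lieDerivativeFinsupp X η := by
  induction η using Finsupp.induction_linear with
  | zero => simp
  | add η η' h h' => simp only [smul_add, map_add, h, h']; abel
  | single v b =>
    rw [Finsupp.smul_single, lieDerivativeFinsupp_single, lieDerivativeFinsupp_single,
      Finsupp.linearCombination_single, smul_eq_mul, X.leibniz]
    module

theorem lieDerivativeFinsupp_eq_zero (X : Derivation R A A) {η : A →₀ A}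
    (hη : linearCombination A (D R A) η = 0) : lieDerivativeFinsupp X η = 0 := by
  rw [← LinearMap.mem_ker, kerTotal_eq] at hη
  induction hη using Submodule.span_induction with
  | mem η hη =>
    obtain ((⟨⟨x, y⟩, rfl⟩ | ⟨⟨x, y⟩, rfl⟩) | ⟨r, rfl⟩) := hη
    · simp [map_add]
    · simp only [map_sub, map_add, lieDerivativeFinsupp_single, X.leibniz, Derivation.leibniz,
        X.map_one_eq_zero, smul_eq_mul]
      module
    · simp
  | zero => simp
  | add η η' _ _ h h' => rw [map_add, h, h', add_zero]
  | smul c η hη h =>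
    rw [lieDerivativeFinsupp_smul, h, LinearMap.mem_ker.mp ((kerTotal_eq R A).ge hη), smul_zero,
      smul_zero, add_zero]

variable (R A) in
noncomputable def lieDerivative : Derivation R A A →ₗ[R] Ω[A⁄R] →ₗ[R] Ω[A⁄R] where
  toFun X := liftOfLinearCombination (lieDerivativeFinsupp X) fun _ ↦ lieDerivativeFinsupp_eq_zero X
  map_add' X Y := by
    refine LinearMap.ext fun ω => ?_
    obtain ⟨η, rfl⟩ := linearCombination_surjective R A ω
    simp only [liftOfLinearCombination_linearCombination, LinearMap.add_apply]
    induction η using Finsupp.induction_linear with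
    | zero => simp
    | add η η' h h' => simp only [map_add, h, h']; abel
    | single v b =>
      simp only [lieDerivativeFinsupp_single, Derivation.coe_add, Pi.add_apply, map_add, add_smul,
        smul_add]
      abel
  map_smul' r X := by
    refine LinearMap.ext fun ω => ?_
    obtain ⟨η, rfl⟩ := linearCombination_surjective R A ω
    simp only [liftOfLinearCombination_linearCombination, LinearMap.smul_apply, RingHom.id_apply]
    induction η using Finsupp.induction_linear with
    | zero => simp
    | add η η' h h' => simp only [map_add, h, h', smul_add]
    | single v b =>
      simp only [lieDerivativeFinsupp_single, Derivation.coe_smul, Pi.smul_apply,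
        Derivation.map_smul, smul_add, smul_assoc, smul_comm r b]

theorem lieDerivative_linearCombination (X : Derivation R A A) (η : A →₀ A) :
    lieDerivative R A X (linearCombination A (D R A) η) = lieDerivativeFinsupp X η :=
  liftOfLinearCombination_linearCombination _ _ η

@[simp]
theorem lieDerivative_D (X : Derivation R A A) (u : A) :
    lieDerivative R A X (D R A u) = D R A (X u) := by
  simpa using lieDerivative_linearCombination X (single u 1)

theorem lieDerivative_smul (X : Derivation R A A) (a : A) (ω : Ω[A⁄R]) :
    lieDerivative R A X (a • ω) = X a • ω + a • lieDerivative R A X ω := by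
  obtain ⟨η, rfl⟩ := linearCombination_surjective R A ω
  rw [← map_smul, lieDerivative_linearCombination, lieDerivative_linearCombination,
    lieDerivativeFinsupp_smul]

theorem lieDerivative_smul_derivation (a : A) (X : Derivation R A A) (ω : Ω[A⁄R]) :
    lieDerivative R A (a • X) ω
      = a • lieDerivative R A X ω + X.liftKaehlerDifferential ω • D R A a := by
  induction ω using span_induction with
  | hD u => simp [Derivation.leibniz, smul_eq_mul]
  | hadd x y hx hy => simp only [map_add, hx, hy, add_smul, smul_add]; abel
  | hsmul b x hx =>
    simp only [lieDerivative_smul, hx, map_smul, Derivation.smul_apply, smul_eq_mul]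
    module

section Poisson

variable (H : Derivation R A (Derivation R A A))

noncomputable def bivector : Ω[A⁄R] →ₗ[A] Ω[A⁄R] →ₗ[A] A :=
  (linearMapEquivDerivation R A).symm.toLinearMap ∘ₗ H.liftKaehlerDifferential

theorem bivector_apply (α β : Ω[A⁄R]) :
    bivector H α β = (H.liftKaehlerDifferential α).liftKaehlerDifferential β := rfl

@[simp]
theorem bivector_D_D (u v : A) : bivector H (D R A u) (D R A v) = H u v := by
  simp [bivector_apply]

variable {H}

theorem bivector_swap (hH : ∀ u v, H u v = -H v u) (α β : Ω[A⁄R]) :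
    bivector H β α = -bivector H α β := by
  have : (bivector H).flip = -bivector H := by
    ext u v
    simp [hH v u]
  exact LinearMap.congr_fun₂ this α β

variable (H) in
noncomputable def koszulBracket : Ω[A⁄R] →ₗ[R] Ω[A⁄R] →ₗ[R] Ω[A⁄R] :=
  LinearMap.mk₂ R
    (fun α β => lieDerivative R A (H.liftKaehlerDifferential α) β
      - lieDerivative R A (H.liftKaehlerDifferential β) α - D R A (bivector H α β))
    (fun α α' β => by simp only [map_add, LinearMap.add_apply]; abel)
    (fun r α β => by
      simp only [LinearMap.map_smul_of_tower, LinearMap.smul_apply, Derivation.map_smul]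
      module)
    (fun α β β' => by simp only [map_add, LinearMap.add_apply]; abel)
    (fun r α β => by
      simp only [LinearMap.map_smul_of_tower, LinearMap.smul_apply, Derivation.map_smul]
      module)

theorem koszulBracket_apply (α β : Ω[A⁄R]) :
    koszulBracket H α β = lieDerivative R A (H.liftKaehlerDifferential α) β
      - lieDerivative R A (H.liftKaehlerDifferential β) α - D R A (bivector H α β) := rfl

variable (H) in
noncomputable def koszulJacobiator (α β γ : Ω[A⁄R]) : Ω[A⁄R] :=
  koszulBracket H α (koszulBracket H β γ) + koszulBracket H β (koszulBracket H γ α)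
    + koszulBracket H γ (koszulBracket H α β)

theorem koszulJacobiator_cycle (α β γ : Ω[A⁄R]) :
    koszulJacobiator H α β γ = koszulJacobiator H β γ α := by
  simp only [koszulJacobiator]
  abel

section Skew

variable (hH : ∀ u v, H u v = -H v u)
include hH

theorem koszulBracket_swap (α β : Ω[A⁄R]) : koszulBracket H β α = -koszulBracket H α β := by
  rw [koszulBracket_apply, koszulBracket_apply, bivector_swap hH, map_neg]
  abel

theorem koszulBracket_D_D (u v : A) : koszulBracket H (D R A u) (D R A v) = D R A (H u v) := by
  simp [koszulBracket_apply, hH v u]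

theorem koszulBracket_smul_right (α β : Ω[A⁄R]) (a : A) :
    koszulBracket H α (a • β) = H.liftKaehlerDifferential α a • β + a • koszulBracket H α β := by
  simp only [koszulBracket_apply, map_smul, lieDerivative_smul, lieDerivative_smul_derivation,
    ← bivector_apply, bivector_swap hH β α, smul_eq_mul, Derivation.leibniz]
  module

theorem koszulBracket_smul_left (α β : Ω[A⁄R]) (a : A) :
    koszulBracket H (a • α) β = a • koszulBracket H α β - H.liftKaehlerDifferential β a • α := by
  rw [koszulBracket_swap hH, koszulBracket_smul_right hH, koszulBracket_swap hH α]
  module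

theorem koszulBracket_smul_D_smul_D (a b u v : A) :
    koszulBracket H (a • D R A u) (b • D R A v)
      = (a * H u b) • D R A v + (b * H a v) • D R A u + (a * b) • D R A (H u v) := by
  rw [koszulBracket_smul_right hH, koszulBracket_smul_left hH, koszulBracket_D_D hH, hH a v]
  simp only [map_smul, Derivation.liftKaehlerDifferential_comp_D, Derivation.smul_apply,
    smul_eq_mul]
  module

variable (hJ : ∀ u v w, H u (H v w) + H v (H w u) + H w (H u v) = 0)
include hJ

theorem liftKaehlerDifferential_koszulBracket (α β : Ω[A⁄R]) :
    H.liftKaehlerDifferential (koszulBracket H α β)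
      = ⁅H.liftKaehlerDifferential α, H.liftKaehlerDifferential β⁆ := by
  let IsMorphismAt (α β : Ω[A⁄R]) : Prop :=
    H.liftKaehlerDifferential (koszulBracket H α β)
      = ⁅H.liftKaehlerDifferential α, H.liftKaehlerDifferential β⁆
  have smul_right (α β : Ω[A⁄R]) (a : A) (h : IsMorphismAt α β) : IsMorphismAt α (a • β) := by
    simp only [IsMorphismAt, koszulBracket_smul_right hH, map_add, map_smul, h,
      LieRinehartRing.leibniz_smul_right, add_comm]
    rfl
  have swap (α β : Ω[A⁄R]) (h : IsMorphismAt α β) : IsMorphismAt β α := by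
    simp only [IsMorphismAt] at h ⊢
    rw [koszulBracket_swap hH α β, map_neg, h, ← lie_skew, neg_neg]
  have D_left (u : A) (β : Ω[A⁄R]) : IsMorphismAt (D R A u) β := by
    induction β using span_induction with
    | hD v =>
      simp [IsMorphismAt, koszulBracket_D_D hH, Derivation.lie_apply_apply_of_jacobi hH hJ]
    | hadd x y hx hy => simp only [IsMorphismAt, map_add, lie_add, hx, hy]
    | hsmul a x hx => exact smul_right _ x a hx
  induction α using span_induction with
  | hD u => exact D_left u β
  | hadd x y hx hy => simp only [map_add, LinearMap.add_apply, hx, hy, add_lie]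
  | hsmul a x hx => exact swap _ _ (smul_right β x a (swap x β hx))

theorem koszulJacobiator_smul_right (α β γ : Ω[A⁄R]) (a : A) :
    koszulJacobiator H α β (a • γ) = a • koszulJacobiator H α β γ := by
  simp only [koszulJacobiator, koszulBracket_smul_right hH, koszulBracket_smul_left hH, map_add,
    map_sub, liftKaehlerDifferential_koszulBracket hH hJ, Derivation.commutator_apply]
  rw [koszulBracket_swap hH γ α]
  module

theorem koszulJacobiator_D_D_D (u v w : A) :
    koszulJacobiator H (D R A u) (D R A v) (D R A w) = 0 := by
  simp only [koszulJacobiator, koszulBracket_D_D hH, ← map_add, hJ u v w, map_zero]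

theorem koszulJacobiator_eq_zero_of_D {α β : Ω[A⁄R]}
    (hD : ∀ w, koszulJacobiator H α β (D R A w) = 0) (γ : Ω[A⁄R]) :
    koszulJacobiator H α β γ = 0 := by
  induction γ using span_induction with
  | hD w => exact hD w
  | hadd x y hx hy =>
    have additive : koszulJacobiator H α β (x + y)
        = koszulJacobiator H α β x + koszulJacobiator H α β y := by
      simp only [koszulJacobiator, map_add, LinearMap.add_apply]
      abel
    rw [additive, hx, hy, add_zero]
  | hsmul a x hx => rw [koszulJacobiator_smul_right hH hJ, hx, smul_zero]

theorem koszulJacobiator_eq_zero (α β γ : Ω[A⁄R]) : koszulJacobiator H α β γ = 0 := by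
  refine koszulJacobiator_eq_zero_of_D hH hJ (fun w => ?_) γ
  rw [← koszulJacobiator_cycle]
  refine koszulJacobiator_eq_zero_of_D hH hJ (fun v => ?_) β
  rw [← koszulJacobiator_cycle]
  exact koszulJacobiator_eq_zero_of_D hH hJ (fun u => koszulJacobiator_D_D_D hH hJ v w u) α

end Skew

end Poisson

end KaehlerDifferential

open KaehlerDifferential

/-- The Lie–Rinehart algebra associated with a Poisson algebra: given a
Poisson bracket `{·,·} = P` on a commutative `ℝ`-algebra `A`, the module of
Kähler differentials `Ω_{A/ℝ}` carries an `ℝ`-bilinear Lie bracket with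
`[a du, b dv] = a{u,b}dv + b{a,v}du + ab d{u,v}`, for which the anchor
`π♯ : Ω_{A/ℝ} → Der(A)`, `π♯(du) = {u,·}`, satisfies the Leibniz rule
`[α, aβ] = π♯(α)(a)β + a[α,β]` and is a morphism of Lie algebras. -/
theorem poisson_lie_rinehart (A : Type*) [CommRing A] [Algebra ℝ A]
    (P : A →ₗ[ℝ] A →ₗ[ℝ] A)
    (hanti : ∀ a b : A, P a b = -P b a)
    (hjacobi : ∀ a b c : A, P a (P b c) + P b (P c a) + P c (P a b) = 0)
    (hleibniz : ∀ a b c : A, P a (b * c) = P a b * c + b * P a c) :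
    ∃ pish : KaehlerDifferential ℝ A →ₗ[A] Derivation ℝ A A,
      (∀ u a : A, pish (KaehlerDifferential.D ℝ A u) a = P u a) ∧
      ∃ br : KaehlerDifferential ℝ A →ₗ[ℝ]
              KaehlerDifferential ℝ A →ₗ[ℝ] KaehlerDifferential ℝ A,
        (∀ a b u v : A,
          br (a • KaehlerDifferential.D ℝ A u) (b • KaehlerDifferential.D ℝ A v)
            = (a * P u b) • KaehlerDifferential.D ℝ A v
              + (b * P a v) • KaehlerDifferential.D ℝ A u
              + (a * b) • KaehlerDifferential.D ℝ A (P u v)) ∧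
        (∀ α β γ : KaehlerDifferential ℝ A,
          br α (br β γ) + br β (br γ α) + br γ (br α β) = 0) ∧
        (∀ (α β : KaehlerDifferential ℝ A) (a : A),
          br α (a • β) = pish α a • β + a • br α β) ∧
        (∀ α β : KaehlerDifferential ℝ A, pish (br α β) = ⁅pish α, pish β⁆) := by
  let H := biderivationOfSkew P hanti hleibniz
  refine ⟨H.liftKaehlerDifferential, fun u a => by simp [H],
    koszulBracket H, koszulBracket_smul_D_smul_D hanti, koszulJacobiator_eq_zero hanti hjacobi,
    koszulBracket_smul_right hanti, liftKaehlerDifferential_koszulBracket hanti hjacobi⟩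
end
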